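/- arXiv:0710.2258 — 2 statements merged into one kernel-verified Lean document; each statement's English description precedes it below -/
import Mathlib

section
/- (Corollary 2.1(ii),(iii)) Let (X, 𝓧) be a measurable space, Ω a family of probability measures on X, and for i = 1,…,s let ω_i ⊆ Ω be the set of measures under which the null hypothesis H_i is true; assume ∩_{i=1}^s ω_i ≠ ∅. For P ∈ Ω put I(P) = {i : P ∈ ω_i}. Let T_1,…,T_s : X → ℝ be measurable test statistics, fix α ∈ (0,1) and 1 ≤ k ≤ s, and suppose the real constants d_K (for K ⊆ {1,…,s} with |K| ≥ k) satisfy: (a) d_K ≥ q_{1−α}( law under P of k-max(T_i : i ∈ K) ) for every P ∈ ∩_{i∈K} ω_i; and (b) d_K ≥ d_{I(P)} whenever P ∈ Ω has |I(P)| ≥ k and K ⊇ I(P). Then for every P ∈ Ω, the step-down procedure (Algorithm 2.1) with statistics T_i and critical values d_K satisfies P{at least k indices in I(P) are rejected} ≤ α. -/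
/-!
Let `I = I(P)`. As long as fewer than `k` true nulls have been rejected, every critical value
used by the step-down procedure is at least `d_I`: if `R` is the current rejection set, some
`I' ⊆ R` of size `k - 1` contains `R ∩ I`, so `I ⊆ Rᶜ ∪ I'` and `d_I ≤ d_{Rᶜ ∪ I'} ≤ d̂`.
Hence, on the event that `k` true nulls are rejected, at least `k` of the `T_i` with `i ∈ I`
exceed `d_I`, i.e. `k-max(T_i : i ∈ I) > d_I ≥ q_{1-α}`, an event of probability at most `α`.
-/

open MeasureTheory Filter

/-- The `k`-th largest of the values `y i`, `i ∈ K` (counted with multiplicity). -/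
noncomputable def kmax {s : ℕ} (k : ℕ) (K : Finset (Fin s)) (y : Fin s → ℝ) : ℝ :=
  ((K.val.map y).sort (· ≤ ·)).getD (K.card - k) 0

/-- The `β`-quantile of a (probability) measure on `ℝ`:
`q_β(L) = inf {x | L((-∞, x]) ≥ β}`. -/
noncomputable def quantile (μ : Measure ℝ) (β : ℝ) : ℝ :=
  sInf {x : ℝ | ENNReal.ofReal β ≤ μ (Set.Iic x)}

/-- The critical value `d̂_{A_j}` of Algorithm 2.1 at a stage where `R` is the set of
previously rejected indices: the maximum of `ĉ_{Rᶜ ∪ I'}` over `I' ⊆ R` with `|I'| = k - 1`. -/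
noncomputable def dcrit {s : ℕ} (k : ℕ) (c : Finset (Fin s) → ℝ) (R : Finset (Fin s)) : ℝ :=
  sSup {x : ℝ | ∃ I' ⊆ R, I'.card = k - 1 ∧ x = c (Rᶜ ∪ I')}

/-- One step of the step-down procedure (Algorithm 2.1): given the set `R` of indices
rejected so far, returns the set of indices rejected after performing the next step. -/
noncomputable def stepDownNext {s : ℕ} (k : ℕ) (c : Finset (Fin s) → ℝ) (T : Fin s → ℝ)
    (R : Finset (Fin s)) : Finset (Fin s) :=
  if R = ∅ then Finset.univ.filter (fun i => c Finset.univ < T i)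
  else if R.card < k then R
  else R ∪ Rᶜ.filter (fun i => dcrit k c R < T i)

/-- The rejection set of the step-down procedure (Algorithm 2.1) with statistics `T` and
critical values `c`. -/
noncomputable def stepDownRejections {s : ℕ} (k : ℕ) (c : Finset (Fin s) → ℝ)
    (T : Fin s → ℝ) : Finset (Fin s) :=
  (stepDownNext k c T)^[s] ∅


open scoped Classical in
/-- The (finite) set `I(P)` of indices of true null hypotheses under `P`. -/
noncomputable def trueSet {X : Type*} [MeasurableSpace X] {s : ℕ}
    (ω : Fin s → Set (Measure X)) (P : Measure X) : Finset (Fin s) :=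
  Finset.univ.filter fun i => P ∈ ω i

open Finset ProbabilityTheory

theorem List.SortedLE.lt_getElem_iff_length_sub_le_countP {α : Type*} [LinearOrder α]
    {l : List α} (hl : l.SortedLE) (c : α) {m : ℕ} (hm : m < l.length) :
    c < l[m] ↔ l.length - m ≤ l.countP (c < ·) := by
  have hmono := hl.getElem_le_getElem_of_le
  constructor
  · intro h
    have hdrop : (l.drop m).countP (c < ·) = l.length - m := by
      rw [List.countP_eq_length.2, List.length_drop]
      intro a ha
      obtain ⟨i, hi, rfl⟩ := List.mem_iff_getElem.1 ha
      simpa using h.trans_le (hmono (by omega : m ≤ m + i))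
    exact hdrop ▸ (List.drop_sublist m l).countP_le
  · intro h
    by_contra! hc
    have htake : (l.take (m + 1)).countP (c < ·) = 0 := by
      rw [List.countP_eq_zero]
      intro a ha
      obtain ⟨i, hi, rfl⟩ := List.mem_iff_getElem.1 ha
      simp only [List.length_take] at hi
      simpa using (hmono (by omega : i ≤ m)).trans hc
    have := List.countP_le_length (p := (c < ·)) (l := l.drop (m + 1))
    rw [← List.take_append_drop (m + 1) l, List.countP_append, htake] at h
    simp only [List.length_drop, List.length_append, List.length_take] at h this
    omega

theorem lt_kmax_iff {s k : ℕ} (hk : 1 ≤ k) {K : Finset (Fin s)} (hK : k ≤ #K)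
    (y : Fin s → ℝ) (c : ℝ) :
    c < kmax k K y ↔ k ≤ #{i ∈ K | c < y i} := by
  set l := (K.val.map y).sort (· ≤ ·)
  have hlen : l.length = #K := by simp [l]
  have hcount : #{i ∈ K | c < y i} = l.countP (c < ·) := by
    rw [← Multiset.coe_countP, Multiset.sort_eq, Multiset.countP_map]
    rfl
  have hm : #K - k < l.length := by omega
  have hsorted : l.SortedLE := (Multiset.pairwise_sort _ _).sortedLE
  rw [kmax, List.getD_eq_getElem _ _ hm, hsorted.lt_getElem_iff_length_sub_le_countP c hm,
    hcount, hlen, Nat.sub_sub_self hK]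

theorem measurable_kmax {X : Type*} [MeasurableSpace X] {s k : ℕ} (hk : 1 ≤ k)
    {K : Finset (Fin s)} (hK : k ≤ #K) {T : Fin s → X → ℝ} (hT : ∀ i, Measurable (T i)) :
    Measurable fun x => kmax k K (fun i => T i x) := by
  refine measurable_of_Ioi fun c => ?_
  have hcount : Measurable fun x => #{i ∈ K | c < T i x} := by
    simp only [card_filter]
    exact Finset.measurable_sum _ fun i _ =>
      Measurable.ite (measurableSet_lt measurable_const (hT i)) measurable_const measurable_const
  have hpre : (fun x => kmax k K (fun i => T i x)) ⁻¹' Set.Ioi c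
      = (fun x => #{i ∈ K | c < T i x}) ⁻¹' Set.Ici k := by
    ext x
    exact lt_kmax_iff hk hK _ c
  exact hpre ▸ hcount (.of_discrete)

theorem le_measure_Iic_of_quantile_lt {μ : Measure ℝ} {β : ℝ}
    (hne : {x : ℝ | ENNReal.ofReal β ≤ μ (Set.Iic x)}.Nonempty) {x : ℝ}
    (hx : quantile μ β < x) : ENNReal.ofReal β ≤ μ (Set.Iic x) := by
  set S := {x : ℝ | ENNReal.ofReal β ≤ μ (Set.Iic x)}
  obtain ⟨y, hyS, hyx⟩ : ∃ y ∈ S, y < x := by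
    -- if `S` is unbounded below, `sInf S` is the junk value `0`, but then `S` reaches below `x`
    by_cases hS : BddBelow S
    · exact exists_lt_of_csInf_lt hne hx
    · simpa using (not_bddBelow_iff.1 hS x)
  exact hyS.trans (measure_mono (Set.Iic_subset_Iic.2 hyx.le))

theorem le_measure_Iic_quantile (μ : Measure ℝ) [IsProbabilityMeasure μ] {β : ℝ} (hβ : β < 1) :
    ENNReal.ofReal β ≤ μ (Set.Iic (quantile μ β)) := by
  have hne : {x : ℝ | ENNReal.ofReal β ≤ μ (Set.Iic x)}.Nonempty := by
    obtain ⟨x, hx⟩ := ((tendsto_cdf_atTop (μ := μ)).eventually_const_le hβ).exists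
    exact ⟨x, (ENNReal.ofReal_le_ofReal hx).trans_eq (ofReal_cdf μ x)⟩
  have hcont : ContinuousWithinAt (fun x => ENNReal.ofReal (cdf μ x))
      (Set.Ioi (quantile μ β)) (quantile μ β) :=
    ENNReal.continuous_ofReal.continuousAt.comp_continuousWithinAt
      (((cdf μ).right_continuous _).mono Set.Ioi_subset_Ici_self)
  rw [← ofReal_cdf]
  refine ge_of_tendsto hcont (eventually_nhdsWithin_of_forall fun x hx => ?_)
  rw [ofReal_cdf]
  exact le_measure_Iic_of_quantile_lt hne hx

theorem measure_Ioi_le_of_quantile_le (μ : Measure ℝ) [IsProbabilityMeasure μ] {α c : ℝ}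
    (hα : 0 < α) (hc : quantile μ (1 - α) ≤ c) : μ (Set.Ioi c) ≤ ENNReal.ofReal α :=
  calc μ (Set.Ioi c) ≤ μ (Set.Iic (quantile μ (1 - α)))ᶜ := by
        rw [Set.compl_Iic]; exact measure_mono (Set.Ioi_subset_Ioi hc)
    _ = 1 - μ (Set.Iic (quantile μ (1 - α))) := prob_compl_eq_one_sub measurableSet_Iic
    _ ≤ 1 - ENNReal.ofReal (1 - α) := tsub_le_tsub_left (le_measure_Iic_quantile μ (by linarith)) 1
    _ ≤ ENNReal.ofReal α := by
        rw [tsub_le_iff_right, ← ENNReal.ofReal_one]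
        exact (congrArg ENNReal.ofReal (by ring)).trans_le ENNReal.ofReal_add_le

section StepDown

variable {s k : ℕ} (d : Finset (Fin s) → ℝ) {I R : Finset (Fin s)}

theorem le_dcrit_of_card_inter_lt (hmono : ∀ K, I ⊆ K → d I ≤ d K)
    (hRI : #(R ∩ I) < k) (hR : k - 1 ≤ #R) : d I ≤ dcrit k d R := by
  obtain ⟨I', hRII', hI'R, hI'⟩ :=
    exists_subsuperset_card_eq inter_subset_left (by omega : #(R ∩ I) ≤ k - 1) hR
  have hIsub : I ⊆ Rᶜ ∪ I' := fun j hj => by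
    by_cases hjR : j ∈ R
    · exact mem_union_right _ (hRII' (mem_inter.2 ⟨hjR, hj⟩))
    · exact mem_union_left _ (mem_compl.2 hjR)
  have hfin : {x : ℝ | ∃ J ⊆ R, #J = k - 1 ∧ x = d (Rᶜ ∪ J)}.Finite :=
    (Set.finite_range d).subset fun _ ⟨_, _, _, hx⟩ => ⟨_, hx.symm⟩
  exact (hmono _ hIsub).trans (le_csSup hfin.bddAbove ⟨I', hI'R, hI', rfl⟩)

variable {d} (T : Fin s → ℝ)

theorem stepDownNext_inter_subset (hmono : ∀ K, I ⊆ K → d I ≤ d K)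
    (hG : #{i ∈ I | d I < T i} < k) (hR : R ∩ I ⊆ {i ∈ I | d I < T i}) :
    stepDownNext k d T R ∩ I ⊆ {i ∈ I | d I < T i} := by
  intro i hi
  obtain ⟨hiNext, hiI⟩ := mem_inter.1 hi
  refine mem_filter.2 ⟨hiI, ?_⟩
  unfold stepDownNext at hiNext
  split_ifs at hiNext with hR₀ hRk
  · exact (hmono _ (subset_univ I)).trans_lt (mem_filter.1 hiNext).2
  · exact (mem_filter.1 (hR (mem_inter.2 ⟨hiNext, hiI⟩))).2
  · rcases mem_union.1 hiNext with hiR | hnew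
    · exact (mem_filter.1 (hR (mem_inter.2 ⟨hiR, hiI⟩))).2
    · have hRI : #(R ∩ I) < k := (card_le_card hR).trans_lt hG
      exact (le_dcrit_of_card_inter_lt d hmono hRI (by omega)).trans_lt (mem_filter.1 hnew).2

theorem le_card_filter_of_le_card_stepDownRejections_inter (hmono : ∀ K, I ⊆ K → d I ≤ d K)
    (h : k ≤ #(stepDownRejections k d T ∩ I)) : k ≤ #{i ∈ I | d I < T i} := by
  by_contra! hG
  have hiter : ∀ m, (stepDownNext k d T)^[m] ∅ ∩ I ⊆ {i ∈ I | d I < T i} := by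
    intro m
    induction m with
    | zero => simp
    | succ m ih =>
      rw [Function.iterate_succ_apply']
      exact stepDownNext_inter_subset T hmono hG ih
  exact (h.trans (card_le_card (hiter s))).not_gt hG

end StepDown

theorem stmt3_general {X : Type*} [MeasurableSpace X] {s k : ℕ}
    (hk1 : 1 ≤ k)
    (Ωs : Set (Measure X)) (ω : Fin s → Set (Measure X))
    (hprob : ∀ P ∈ Ωs, IsProbabilityMeasure P)
    (T : Fin s → X → ℝ) (hT : ∀ i, Measurable (T i))
    (α : ℝ) (hα : α ∈ Set.Ioo (0:ℝ) 1)
    (d : Finset (Fin s) → ℝ)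
    (hd : ∀ K : Finset (Fin s), k ≤ K.card → ∀ P : Measure X, (∀ i ∈ K, P ∈ ω i) →
      quantile (Measure.map (fun a => kmax k K (fun i => T i a)) P) (1 - α) ≤ d K)
    (hmono : ∀ P ∈ Ωs, k ≤ (trueSet ω P).card →
      ∀ K : Finset (Fin s), trueSet ω P ⊆ K → d (trueSet ω P) ≤ d K) :
    ∀ P ∈ Ωs,
      P {x | k ≤ ((stepDownRejections k d (fun i => T i x)) ∩ trueSet ω P).card}
        ≤ ENNReal.ofReal α := by
  intro P hP
  set I := trueSet ω P
  by_cases hIk : k ≤ #I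
  · have := hprob P hP
    set g := fun x => kmax k I (fun i => T i x)
    have hg : Measurable g := measurable_kmax hk1 hIk hT
    have := Measure.isProbabilityMeasure_map (μ := P) hg.aemeasurable
    have hnull : ∀ i ∈ I, P ∈ ω i := fun i hi => by simpa [I, trueSet] using hi
    calc P {x | k ≤ #(stepDownRejections k d (fun i => T i x) ∩ I)}
        ≤ P (g ⁻¹' Set.Ioi (d I)) := measure_mono fun x hx => (lt_kmax_iff hk1 hIk _ _).2 <|
          le_card_filter_of_le_card_stepDownRejections_inter _ (hmono P hP hIk) hx
      _ = P.map g (Set.Ioi (d I)) := (Measure.map_apply hg measurableSet_Ioi).symm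
      _ ≤ ENNReal.ofReal α := measure_Ioi_le_of_quantile_le _ hα.1 (hd I hIk P hnull)
  · have hempty : {x | k ≤ #(stepDownRejections k d (fun i => T i x) ∩ I)} = ∅ :=
      Set.eq_empty_of_forall_notMem fun x hx => hIk (hx.trans (card_le_card inter_subset_right))
    rw [hempty, measure_empty]
    exact zero_le

/-- Corollary 2.1(ii),(iii): the step-down procedure with nonrandom critical
values `d_K` that dominate the `(1-α)`-quantile of the law of `k-max(T_i : i ∈ K)` under
every `P ∈ ∩_{i∈K} ω_i`, and are monotone above `d_{I(P)}`, controls the `k`-FWER at `α`. -/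
theorem stmt3 {X : Type*} [MeasurableSpace X] {s k : ℕ}
    (hs : 1 ≤ s) (hk1 : 1 ≤ k) (hks : k ≤ s)
    (Ωs : Set (Measure X)) (ω : Fin s → Set (Measure X))
    (hsub : ∀ i, ω i ⊆ Ωs)
    (hprob : ∀ P ∈ Ωs, IsProbabilityMeasure P)
    (hne : (⋂ i, ω i).Nonempty)
    (T : Fin s → X → ℝ) (hT : ∀ i, Measurable (T i))
    (α : ℝ) (hα : α ∈ Set.Ioo (0:ℝ) 1)
    (d : Finset (Fin s) → ℝ)
    (hd : ∀ K : Finset (Fin s), k ≤ K.card → ∀ P : Measure X, (∀ i ∈ K, P ∈ ω i) →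
      quantile (Measure.map (fun a => kmax k K (fun i => T i a)) P) (1 - α) ≤ d K)
    (hmono : ∀ P ∈ Ωs, k ≤ (trueSet ω P).card →
      ∀ K : Finset (Fin s), trueSet ω P ⊆ K → d (trueSet ω P) ≤ d K) :
    ∀ P ∈ Ωs,
      P {x | k ≤ ((stepDownRejections k d (fun i => T i x)) ∩ trueSet ω P).card}
        ≤ ENNReal.ofReal α :=
  stmt3_general hk1 Ωs ω hprob T hT α hα d hd hmono
end

section
/- (The generalized Holm step-down procedure controls the k-FWER) Let (Ω, 𝓕, P) be a probability space, let p̂_1,…,p̂_s be random variables with values in [0,1], let I ⊆ {1,…,s} be the set of indices of true null hypotheses, and assume that for every i ∈ I and every u ∈ [0,1], P{p̂_i ≤ u} ≤ u. Fix 1 ≤ k ≤ s and α ∈ (0,1). Then the generalized Holm step-down procedure with constants α_j (defined in the context) satisfies P{at least k indices in I are rejected} ≤ α, for any fixed tie-breaking rule. -/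
open MeasureTheory Filter Topology

/-- The step-down constants `α_j` of the generalized Holm procedure (1-based index `j`):
`α_j = kα/s` for `j ≤ k` and `α_j = kα/(s + k - j)` for `j > k`. -/
noncomputable def holmConst (s k : ℕ) (α : ℝ) (j : Fin s) : ℝ :=
  if (j : ℕ) + 1 ≤ k then (k : ℝ) * α / s
  else (k : ℝ) * α / ((s : ℝ) + (k : ℝ) - ((j : ℕ) + 1))

/-- The rejection set of the generalized Holm step-down procedure, where
`σ ω : Fin s ≃ Fin s` sorts the `p`-values increasingly (a fixed tie-breaking rule):
with `R = max { r : p̂_(j) ≤ α_j for all j = 1,…,r }`, the hypotheses corresponding to the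
`R` smallest `p`-values are rejected. -/
noncomputable def holmRejected {Ω : Type*} {s : ℕ} (k : ℕ) (α : ℝ)
    (phat : Fin s → Ω → ℝ) (σ : Ω → (Fin s ≃ Fin s)) (ω : Ω) : Finset (Fin s) :=
  Finset.univ.filter fun i => ((σ ω).symm i : ℕ) <
    Nat.findGreatest
      (fun r => ∀ j : Fin s, (j : ℕ) < r → phat (σ ω j) ω ≤ holmConst s k α j) s

/-!
If at least `k` true nulls are rejected, let `r` be the sorted position of the `k`-th of them.
Every true null sorted before `r` is rejected too, so exactly `k` true nulls occupy positions
`0, …, r`; the other `r + 1 - k` positions hold false nulls, whence `|I| + r + 1 ≤ s + k`. This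
inequality is exactly what makes `α_r ≤ kα/|I|`, so at least `k` true nulls have
`p̂_i ≤ kα/|I|`. By Markov's inequality applied to the number of such `i`, this event has
probability at most `|I| · (kα/|I|) / k = α`.
-/

open scoped ENNReal
open Finset

theorem Finset.exists_mem_card_filter_le_eq {β : Type*} [LinearOrder β] (T : Finset β) {k : ℕ}
    (hk0 : 0 < k) (hk : k ≤ #T) : ∃ r ∈ T, #(T.filter (· ≤ r)) = k := by
  induction T using Finset.induction_on_max with
  | empty => simp at hk; omega
  | insert a T hlt ih =>
    have ha : a ∉ T := fun h => lt_irrefl a (hlt a h)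
    rw [card_insert_of_notMem ha] at hk
    rcases hk.lt_or_eq with hk | hk
    · obtain ⟨r, hr, hcard⟩ := ih (by omega)
      refine ⟨r, mem_insert_of_mem hr, ?_⟩
      rwa [filter_insert, if_neg (hlt r hr).not_ge]
    · refine ⟨a, mem_insert_self a T, ?_⟩
      rw [filter_true_of_mem fun x hx => ?_, card_insert_of_notMem ha, hk]
      rcases mem_insert.mp hx with rfl | hx
      exacts [le_rfl, (hlt x hx).le]

theorem Fin.card_add_succ_le_add_card_filter_le {s : ℕ} (T : Finset (Fin s)) (r : Fin s) :
    #T + (r + 1) ≤ s + #(T.filter (· ≤ r)) := by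
  have hunion := card_union_add_card_inter T (Iic r)
  have huniv := card_le_univ (T ∪ Iic r)
  rw [Fin.card_Iic, ← filter_mem_eq_inter] at hunion
  simp only [Finset.mem_Iic] at hunion
  rw [Fintype.card_fin] at huniv
  omega

theorem le_card_filter_le_of_stepDown {s k : ℕ} {I : Finset (Fin s)} {p c : Fin s → ℝ} {u : ℝ}
    (σ : Fin s ≃ Fin s) (hσ : Monotone (p ∘ σ))
    (hc : ∀ j : Fin s, #I + (j + 1) ≤ s + k → c j ≤ u)
    {R : ℕ} (hR : ∀ j : Fin s, (j : ℕ) < R → p (σ j) ≤ c j)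
    (hk : k ≤ #(I.filter fun i => (σ.symm i : ℕ) < R)) :
    k ≤ #(I.filter fun i => p i ≤ u) := by
  rcases Nat.eq_zero_or_pos k with rfl | hk0
  · exact Nat.zero_le _
  set pos := I.map σ.symm.toEmbedding
  have hpos : ∀ j, j ∈ pos ↔ σ j ∈ I := fun j => by simp [pos]
  obtain ⟨r, hr, hcard⟩ := (pos.filter fun j => j.val < R).exists_mem_card_filter_le_eq hk0
    (by rwa [filter_map, card_map])
  have hrR : (r : ℕ) < R := (mem_filter.mp hr).2
  have hcard' : #(pos.filter (· ≤ r)) = k := by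
    rw [← hcard, filter_filter]
    congr 1
    exact filter_congr fun j _ => ⟨fun hj => ⟨lt_of_le_of_lt hj hrR, hj⟩, And.right⟩
  have hcount := Fin.card_add_succ_le_add_card_filter_le pos r
  rw [card_map, hcard'] at hcount
  calc k = #((pos.filter (· ≤ r)).map σ.toEmbedding) := by rw [card_map, hcard']
    _ ≤ _ := card_le_card fun i hi => by
      obtain ⟨j, hj, rfl⟩ := mem_map.mp hi
      obtain ⟨hjI, hjr⟩ := mem_filter.mp hj
      exact mem_filter.mpr ⟨(hpos j).mp hjI,
        (hσ hjr).trans ((hR r hrR).trans (hc r hcount))⟩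

theorem holmConst_le_div {s k n : ℕ} {α : ℝ} (hα : 0 ≤ α) (hn : 0 < n) (hns : n ≤ s)
    {j : Fin s} (hj : n + (j + 1) ≤ s + k) : holmConst s k α j ≤ k * α / n := by
  have hn' : (0 : ℝ) < n := by exact_mod_cast hn
  unfold holmConst
  split_ifs
  · exact div_le_div_of_nonneg_left (by positivity) hn' (by exact_mod_cast hns)
  · have : (n : ℝ) + (j + 1) ≤ s + k := by exact_mod_cast hj
    exact div_le_div_of_nonneg_left (by positivity) hn' (by linarith)

theorem le_card_filter_le_of_le_card_inter_holmRejected {Ω : Type*} {s k : ℕ} {α : ℝ}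
    (hα : 0 ≤ α) {phat : Fin s → Ω → ℝ} {σ : Ω → (Fin s ≃ Fin s)} {ω : Ω}
    (hσ : Monotone fun j => phat (σ ω j) ω) {I : Finset (Fin s)} (hI : 0 < #I)
    (h : k ≤ #(I ∩ holmRejected k α phat σ ω)) :
    k ≤ #(I.filter fun i => phat i ω ≤ k * α / #I) := by
  rw [holmRejected, inter_filter, inter_univ] at h
  refine le_card_filter_le_of_stepDown (σ ω) hσ
    (fun j hj => holmConst_le_div hα hI (card_le_univ I |>.trans_eq (Fintype.card_fin s)) hj)
    (fun j hj => ?_) h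
  exact Nat.findGreatest_spec
    (P := fun r => ∀ j : Fin s, (j : ℕ) < r → phat (σ ω j) ω ≤ holmConst s k α j)
    (Nat.zero_le s) (fun j hj => absurd hj (Nat.not_lt_zero _)) j hj

theorem MeasureTheory.natCast_mul_measure_le_card_filter_mem_le_sum {Ω ι : Type*}
    [MeasurableSpace Ω] (μ : Measure Ω) (I : Finset ι) {A : ι → Set Ω}
    [∀ i, DecidablePred (· ∈ A i)] (hA : ∀ i ∈ I, NullMeasurableSet (A i) μ) (k : ℕ) :
    k * μ {ω | k ≤ #(I.filter fun i => ω ∈ A i)} ≤ ∑ i ∈ I, μ (A i) := by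
  have hcount : ∀ ω, (#(I.filter fun i => ω ∈ A i) : ℝ≥0∞) = ∑ i ∈ I, (A i).indicator 1 ω :=
    fun ω => by
      rw [card_filter, Nat.cast_sum]
      exact sum_congr rfl fun i _ => by by_cases h : ω ∈ A i <;> simp [h]
  have hmeas : ∀ i ∈ I, AEMeasurable ((A i).indicator 1) μ :=
    fun i hi => (aemeasurable_const (b := (1 : ℝ≥0∞))).indicator₀ (hA i hi)
  calc (k : ℝ≥0∞) * μ {ω | k ≤ #(I.filter fun i => ω ∈ A i)}
      = k * μ {ω | (k : ℝ≥0∞) ≤ ∑ i ∈ I, (A i).indicator 1 ω} := by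
        simp only [← hcount, Nat.cast_le]
    _ ≤ ∫⁻ ω, ∑ i ∈ I, (A i).indicator 1 ω ∂μ :=
        mul_meas_ge_le_lintegral₀ (Finset.aemeasurable_fun_sum I hmeas) k
    _ = ∑ i ∈ I, μ (A i) := by
        rw [lintegral_finsetSum' I hmeas]
        exact sum_congr rfl fun i hi => lintegral_indicator_one₀ (hA i hi)

theorem stmt17_general {Ω : Type*} [MeasurableSpace Ω] (P : Measure Ω) [IsProbabilityMeasure P]
    {s k : ℕ} (hk1 : 1 ≤ k)
    (phat : Fin s → Ω → ℝ) (hmeas : ∀ i, Measurable (phat i))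
    (I : Finset (Fin s))
    (hp : ∀ i ∈ I, ∀ u ∈ Set.Icc (0:ℝ) 1, P {ω | phat i ω ≤ u} ≤ ENNReal.ofReal u)
    (α : ℝ) (hα : α ∈ Set.Ioo (0:ℝ) 1)
    (σ : Ω → (Fin s ≃ Fin s))
    (hσ : ∀ ω : Ω, Monotone fun j => phat (σ ω j) ω) :
    P {ω | k ≤ (I ∩ holmRejected k α phat σ ω).card} ≤ ENNReal.ofReal α := by
  obtain ⟨hα0, hα1⟩ := hα
  rcases lt_or_ge #I k with hIk | hkI
  · have hempty : {ω | k ≤ #(I ∩ holmRejected k α phat σ ω)} = ∅ :=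
      Set.eq_empty_of_forall_notMem fun ω hω =>
        hIk.not_ge (le_trans hω (card_le_card inter_subset_left))
    simp [hempty]
  have hI : (0 : ℝ) < #I := by exact_mod_cast hk1.trans hkI
  set u : ℝ := k * α / #I
  have hu : u ∈ Set.Icc (0 : ℝ) 1 := by
    refine ⟨by positivity, (div_le_iff₀ hI).mpr ?_⟩
    have : (k : ℝ) ≤ #I := by exact_mod_cast hkI
    nlinarith
  have hk : (k : ℝ≥0∞) ≠ 0 := Nat.cast_ne_zero.mpr (by omega)
  refine (ENNReal.mul_le_mul_iff_right hk (ENNReal.natCast_ne_top k)).mp ?_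
  calc (k : ℝ≥0∞) * P {ω | k ≤ #(I ∩ holmRejected k α phat σ ω)}
      ≤ k * P {ω | k ≤ #(I.filter fun i => phat i ω ≤ u)} :=
        mul_le_mul_right (measure_mono fun ω =>
          le_card_filter_le_of_le_card_inter_holmRejected hα0.le (hσ ω) (by exact_mod_cast hI)) _
    _ ≤ ∑ i ∈ I, P {ω | phat i ω ≤ u} :=
        natCast_mul_measure_le_card_filter_mem_le_sum P I (A := fun i => {ω | phat i ω ≤ u})
          (fun i _ => (hmeas i measurableSet_Iic).nullMeasurableSet) k
    _ ≤ ∑ i ∈ I, ENNReal.ofReal u := sum_le_sum fun i hi => hp i hi u hu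
    _ = k * ENNReal.ofReal α := by
        rw [sum_const, nsmul_eq_mul, ← ENNReal.ofReal_natCast, ← ENNReal.ofReal_natCast k,
          ← ENNReal.ofReal_mul hI.le, ← ENNReal.ofReal_mul (Nat.cast_nonneg k),
          mul_div_cancel₀ _ hI.ne']

/-- the generalized Holm step-down procedure controls the `k`-FWER at level
`α`, for any fixed tie-breaking rule (encoded by a sorting permutation `σ ω`). -/
theorem stmt17 {Ω : Type*} [MeasurableSpace Ω] (P : Measure Ω) [IsProbabilityMeasure P]
    {s k : ℕ} (hs : 1 ≤ s) (hk1 : 1 ≤ k) (hks : k ≤ s)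
    (phat : Fin s → Ω → ℝ) (hmeas : ∀ i, Measurable (phat i))
    (hrange : ∀ i ω, phat i ω ∈ Set.Icc (0:ℝ) 1)
    (I : Finset (Fin s))
    (hp : ∀ i ∈ I, ∀ u ∈ Set.Icc (0:ℝ) 1, P {ω | phat i ω ≤ u} ≤ ENNReal.ofReal u)
    (α : ℝ) (hα : α ∈ Set.Ioo (0:ℝ) 1)
    (σ : Ω → (Fin s ≃ Fin s))
    (hσ : ∀ ω : Ω, Monotone fun j => phat (σ ω j) ω) :
    P {ω | k ≤ (I ∩ holmRejected k α phat σ ω).card} ≤ ENNReal.ofReal α :=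
  stmt17_general P hk1 phat hmeas I hp α hα σ hσ
end
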